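/- With p_{AB} as above, the Euclidean norm of p_{AB} equals √(abc(a+b)/(ab+ac+bc)). -/

import Mathlib

/-!
A pair `s(x, y)` meets at most two of the pairwise disjoint sets `A`, `B`, `C`, so the three split
vectors have disjoint supports and are orthogonal, while `‖δ_{U|V}‖² = |U| |V|` counts the pairs
crossing `U|V`. Pythagoras then turns `‖p_{AB}‖²` into a rational identity in `a`, `b`, `c`.
-/

open Finset
open scoped Classical

variable {X : Type*} [Fintype X] [DecidableEq X]

/-- Split pseudometric: coordinate at pair s is 1 if s meets both U and V, else 0. -/
noncomputable def splitDelta (U V : Finset X) : EuclideanSpace ℝ (Sym2 X) :=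
  WithLp.toLp 2 (fun s => if (∃ i ∈ s, i ∈ U) ∧ (∃ j ∈ s, j ∈ V) then 1 else 0)

theorem Sym2.eq_or_eq_or_eq_of_mem {α : Type*} {s : Sym2 α} {i j k : α}
    (hi : i ∈ s) (hj : j ∈ s) (hk : k ∈ s) : i = j ∨ i = k ∨ j = k := by
  induction s using Sym2.ind with
  | _ x y =>
    rw [Sym2.mem_iff] at hi hj hk
    rcases hi with rfl | rfl <;> rcases hj with rfl | rfl <;> rcases hk with rfl | rfl <;> simp

theorem norm_smul_add_smul_add_sq {E : Type*} [NormedAddCommGroup E] [InnerProductSpace ℝ E]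
    {x y z : E} (hxy : inner ℝ x y = 0) (hxz : inner ℝ x z = 0) (hyz : inner ℝ y z = 0)
    (α β : ℝ) :
    ‖α • x + β • (y + z)‖ ^ 2 = α ^ 2 * ‖x‖ ^ 2 + β ^ 2 * (‖y‖ ^ 2 + ‖z‖ ^ 2) := by
  have norm_smul_sq (r : ℝ) (v : E) : ‖r • v‖ ^ 2 = r ^ 2 * ‖v‖ ^ 2 := by
    rw [norm_smul, mul_pow, Real.norm_eq_abs, sq_abs]
  rw [norm_add_sq_real, inner_smul_left, inner_smul_right, inner_add_right, hxy, hxz,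
    norm_smul_sq, norm_smul_sq, norm_add_sq_real, hyz]
  ring

section

variable (U V : Finset X)

theorem splitDelta_apply (s : Sym2 X) :
    splitDelta U V s = if (∃ i ∈ s, i ∈ U) ∧ (∃ j ∈ s, j ∈ V) then 1 else 0 :=
  rfl

theorem splitDelta_comm : splitDelta U V = splitDelta V U := by
  ext s
  simp only [splitDelta_apply, and_comm]

variable {U V}

theorem card_filter_meet_meet (hUV : Disjoint U V) :
    #{s : Sym2 X | (∃ i ∈ s, i ∈ U) ∧ (∃ j ∈ s, j ∈ V)} = #U * #V := by
  have h_image : ({s : Sym2 X | (∃ i ∈ s, i ∈ U) ∧ (∃ j ∈ s, j ∈ V)} : Finset (Sym2 X)) =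
      (U ×ˢ V).image fun p => s(p.1, p.2) := by
    ext s
    induction s using Sym2.ind with
    | _ x y =>
      simp only [mem_filter, mem_univ, true_and, mem_image, mem_product, Prod.exists,
        Sym2.mem_iff, exists_eq_or_imp, exists_eq_left, Sym2.eq_iff]
      constructor
      · rintro ⟨hx | hy, hx' | hy'⟩
        · exact absurd hx' (disjoint_left.mp hUV hx)
        · exact ⟨x, y, ⟨hx, hy'⟩, by simp⟩
        · exact ⟨y, x, ⟨hy, hx'⟩, by simp⟩
        · exact absurd hy' (disjoint_left.mp hUV hy)
      · rintro ⟨u, v, ⟨hu, hv⟩, ⟨rfl, rfl⟩ | ⟨rfl, rfl⟩⟩ <;> simp_all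
  rw [h_image, card_image_of_injOn, card_product]
  rintro ⟨u, v⟩ huv ⟨u', v'⟩ huv' h_eq
  simp only [coe_product, Set.mem_prod, mem_coe] at huv huv'
  rcases Sym2.mk_eq_mk_iff.mp h_eq with h | h
  · exact h
  · simp only [Prod.swap_prod_mk, Prod.mk.injEq] at h
    exact absurd huv'.2 (disjoint_left.mp hUV (h.1 ▸ huv.1))

theorem norm_splitDelta_sq (hUV : Disjoint U V) :
    ‖splitDelta U V‖ ^ 2 = (#U : ℝ) * #V := by
  rw [← real_inner_self_eq_norm_sq, PiLp.inner_apply]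
  simp [splitDelta_apply, sum_boole, card_filter_meet_meet hUV]

theorem inner_splitDelta_splitDelta_eq_zero {W : Finset X} (hUV : Disjoint U V)
    (hUW : Disjoint U W) (hVW : Disjoint V W) :
    inner ℝ (splitDelta U V) (splitDelta U W) = 0 := by
  rw [PiLp.inner_apply]
  refine sum_eq_zero fun s _ => ?_
  by_cases hV : (∃ i ∈ s, i ∈ U) ∧ ∃ j ∈ s, j ∈ V
  · have hW : ¬∃ k ∈ s, k ∈ W := by
      obtain ⟨⟨i, hi, hiU⟩, j, hj, hjV⟩ := hV
      rintro ⟨k, hk, hkW⟩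
      rcases Sym2.eq_or_eq_or_eq_of_mem hi hj hk with rfl | rfl | rfl
      · exact disjoint_left.mp hUV hiU hjV
      · exact disjoint_left.mp hUW hiU hkW
      · exact disjoint_left.mp hVW hjV hkW
    simp [splitDelta_apply, hW]
  · simp [splitDelta_apply, hV]

end

theorem sq_div_mul_add_sq_div_mul (a b c : ℝ) :
    (-(a * c + b * c) / (a * b + a * c + b * c)) ^ 2 * (a * b) +
        (a * b / (a * b + a * c + b * c)) ^ 2 * (a * c + b * c) =
      a * b * c * (a + b) / (a * b + a * c + b * c) := by
  set D := a * b + a * c + b * c with hD_def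
  rcases eq_or_ne D 0 with hD | hD
  · -- both sides are junk values `_ / 0 = 0`
    simp [hD]
  · field_simp
    rw [hD_def]
    ring

theorem norm_pAB_general (A B C : Finset X)
    (hAB : Disjoint A B) (hAC : Disjoint A C) (hBC : Disjoint B C) :
    let a : ℝ := A.card; let b : ℝ := B.card; let c : ℝ := C.card
    let pAB : EuclideanSpace ℝ (Sym2 X) :=
      (-(a * c + b * c) / (a * b + a * c + b * c)) • splitDelta A B +
        (a * b / (a * b + a * c + b * c)) • (splitDelta A C + splitDelta B C)
    ‖pAB‖ = Real.sqrt (a * b * c * (a + b) / (a * b + a * c + b * c)) := by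
  intro a b c pAB
  have h_AB_AC := inner_splitDelta_splitDelta_eq_zero hAB hAC hBC
  have h_AB_BC : inner ℝ (splitDelta A B) (splitDelta B C) = 0 := by
    rw [splitDelta_comm A B]
    exact inner_splitDelta_splitDelta_eq_zero hAB.symm hBC hAC
  have h_AC_BC : inner ℝ (splitDelta A C) (splitDelta B C) = 0 := by
    rw [splitDelta_comm A C, splitDelta_comm B C]
    exact inner_splitDelta_splitDelta_eq_zero hAC.symm hBC.symm hAB
  have h_sq : ‖pAB‖ ^ 2 = a * b * c * (a + b) / (a * b + a * c + b * c) := by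
    rw [norm_smul_add_smul_add_sq h_AB_AC h_AB_BC h_AC_BC, norm_splitDelta_sq hAB,
      norm_splitDelta_sq hAC, norm_splitDelta_sq hBC]
    exact sq_div_mul_add_sq_div_mul a b c
  rw [← h_sq, Real.sqrt_sq (norm_nonneg _)]

/-- ‖p_{AB}‖ = √(abc(a+b)/(ab+ac+bc)). -/
theorem norm_pAB (A B C : Finset X)
    (hA : A.Nonempty) (hB : B.Nonempty) (hC : C.Nonempty)
    (hAB : Disjoint A B) (hAC : Disjoint A C) (hBC : Disjoint B C) :
    let a : ℝ := A.card; let b : ℝ := B.card; let c : ℝ := C.card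
    let pAB : EuclideanSpace ℝ (Sym2 X) :=
      (-(a * c + b * c) / (a * b + a * c + b * c)) • splitDelta A B +
        (a * b / (a * b + a * c + b * c)) • (splitDelta A C + splitDelta B C)
    ‖pAB‖ = Real.sqrt (a * b * c * (a + b) / (a * b + a * c + b * c)) :=
  norm_pAB_general A B C hAB hAC hBC
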